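/- Pinsker's inequality: for probability distributions P and Q on a finite set, the total variation distance satisfies δ_TV(P,Q) ≤ √(D_KL(P‖Q)/2), equivalently ‖P − Q‖₁ ≤ √(2·D_KL(P‖Q)). -/

import Mathlib

open Finset

noncomputable def pinskerAux (t : ℝ) : ℝ := Real.log t - (t-1)*(5*t+1)/(2*t*(t+2))

lemma pinskerAux_deriv {x : ℝ} (hx : 0 < x) :
    HasDerivAt pinskerAux ((x-1)^3/(x^2*(x+2)^2)) x := by
  have hu : HasDerivAt (fun x : ℝ => (x-1)*(5*x+1)) ((1)*(5*x+1)+(x-1)*(5*1)) x := by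
    exact ((hasDerivAt_id x).sub_const 1).mul
      (((hasDerivAt_id x).const_mul 5).add_const 1)
  have hv : HasDerivAt (fun x : ℝ => 2*x*(x+2)) ((2*1)*(x+2)+2*x*1) x := by
    exact ((hasDerivAt_id x).const_mul 2).mul ((hasDerivAt_id x).add_const 2)
  have hvne : 2*x*(x+2) ≠ 0 := by positivity
  have hdiv := hu.div hv hvne
  have hlog := Real.hasDerivAt_log hx.ne'
  have h := hlog.sub hdiv
  have h' : HasDerivAt pinskerAux _ x := h
  convert h' using 1
  have h1 : x ≠ 0 := hx.ne'
  have h2 : x + 2 ≠ 0 := by positivity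
  field_simp
  ring
lemma pinsker_key {t : ℝ} (ht : 0 < t) :
    (t-1)*(5*t+1)/(2*t*(t+2)) ≤ Real.log t := by
  have haux1 : pinskerAux 1 = 0 := by simp [pinskerAux]
  have key : 0 ≤ pinskerAux t := by
    rcases le_or_gt 1 t with h1 | h1
    · have mono : MonotoneOn pinskerAux (Set.Ici 1) := by
        apply monotoneOn_of_deriv_nonneg (convex_Ici 1)
        · intro x hx
          exact (pinskerAux_deriv (lt_of_lt_of_le one_pos hx)).continuousAt.continuousWithinAt
        · intro x hx
          rw [interior_Ici] at hx
          exact (pinskerAux_deriv (lt_trans one_pos hx)).differentiableAt.differentiableWithinAt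
        · intro x hx
          rw [interior_Ici] at hx
          rw [(pinskerAux_deriv (lt_trans one_pos hx)).deriv]
          have hx1 : (1:ℝ) < x := hx
          have h3 : (0:ℝ) ≤ (x-1)^3 := by
            apply pow_nonneg; linarith
          have h4 : (0:ℝ) < x^2*(x+2)^2 := by
            have : (0:ℝ) < x := by linarith
            positivity
          positivity
      have := mono (Set.self_mem_Ici) (Set.mem_Ici.2 h1) h1
      rwa [haux1] at this
    · have anti : AntitoneOn pinskerAux (Set.Ioc 0 1) := by
        apply antitoneOn_of_deriv_nonpos (convex_Ioc 0 1)
        · intro x hx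
          exact (pinskerAux_deriv hx.1).continuousAt.continuousWithinAt
        · intro x hx
          rw [interior_Ioc] at hx
          exact (pinskerAux_deriv hx.1).differentiableAt.differentiableWithinAt
        · intro x hx
          rw [interior_Ioc] at hx
          rw [(pinskerAux_deriv hx.1).deriv]
          apply div_nonpos_of_nonpos_of_nonneg
          · have hle : x - 1 ≤ 0 := by linarith [hx.2]
            exact Odd.pow_nonpos ⟨1, by norm_num⟩ hle
          · positivity
      have := anti (Set.mem_Ioc.2 ⟨ht, h1.le⟩) (Set.mem_Ioc.2 ⟨one_pos, le_refl 1⟩) h1.le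
      rwa [haux1] at this
  have := key
  unfold pinskerAux at this
  linarith
lemma pinsker_ptwise {x y : ℝ} (hx : 0 ≤ x) (hy : 0 ≤ y) (hxy : 0 < x → 0 < y) :
    3 * (x-y)^2 / (x+2*y) ≤
      2 * ((if x = 0 then 0 else x * Real.log (x/y)) - x + y) := by
  rcases eq_or_lt_of_le hx with h0 | hxpos
  · simp only [← h0, if_pos rfl]
    rcases eq_or_lt_of_le hy with hy0 | hypos
    · simp [← hy0]
    · norm_num
      rw [div_le_iff₀ (by positivity : (0:ℝ) < 2*y)]
      nlinarith
  · have hypos := hxy hxpos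
    rw [if_neg hxpos.ne']
    have ht : 0 < x / y := div_pos hxpos hypos
    have key := pinsker_key ht
    have hmul := mul_le_mul_of_nonneg_left key hxpos.le
    have heq : x * ((x/y-1)*(5*(x/y)+1)/(2*(x/y)*((x/y)+2))) =
        3 * (x-y)^2 / (2*(x+2*y)) + x - y := by
      have hy' : y ≠ 0 := hypos.ne'
      have hx' : x ≠ 0 := hxpos.ne'
      have h2 : x + 2*y ≠ 0 := by positivity
      have h3 : 2*(x/y)*((x/y)+2) ≠ 0 := by positivity
      field_simp
      ring
    rw [heq] at hmul
    have h2 : (0:ℝ) < x + 2*y := by positivity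
    have : 3 * (x-y)^2 / (x+2*y) = 2 * (3 * (x-y)^2 / (2*(x+2*y))) := by
      field_simp
    rw [this]
    linarith

/-- Pinsker's inequality on a finite set: the total variation distance is at
most `√(D_KL(P‖Q)/2)`, equivalently `‖P − Q‖₁ ≤ √(2 D_KL(P‖Q))`. -/
theorem pinsker_finite {E : Type*} [Fintype E]
    (P Q : E → ℝ)
    (hP0 : ∀ j, 0 ≤ P j) (hP1 : ∑ j, P j = 1)
    (hQ0 : ∀ j, 0 ≤ Q j) (hQ1 : ∑ j, Q j = 1)
    (habs : ∀ j, 0 < P j → 0 < Q j) :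
    ((Finset.univ : Finset E).powerset.sup' (by simp)
        (fun A => |∑ j ∈ A, P j - ∑ j ∈ A, Q j|) ≤
      Real.sqrt ((∑ j, if P j = 0 then 0 else P j * Real.log (P j / Q j)) / 2))
    ∧
    (∑ j, |P j - Q j| ≤
      Real.sqrt (2 * ∑ j, if P j = 0 then 0 else P j * Real.log (P j / Q j))) := by
  classical
  set D := ∑ j, if P j = 0 then 0 else P j * Real.log (P j / Q j) with hD
  have hsnn : ∀ j, (0:ℝ) ≤ P j + 2 * Q j := fun j => by linarith [hP0 j, hQ0 j]
  -- Sum of pointwise inequalities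
  have hsum1 : ∑ j, 3 * (P j - Q j)^2 / (P j + 2*Q j) ≤ 2 * D := by
    have step : ∑ j, 3 * (P j - Q j)^2 / (P j + 2*Q j) ≤
        ∑ j, 2 * ((if P j = 0 then 0 else P j * Real.log (P j / Q j)) - P j + Q j) :=
      Finset.sum_le_sum fun j _ => pinsker_ptwise (hP0 j) (hQ0 j) (habs j)
    have expand : ∑ j, 2 * ((if P j = 0 then 0 else P j * Real.log (P j / Q j)) - P j + Q j)
        = 2 * (D - ∑ j, P j + ∑ j, Q j) := by
      rw [← Finset.mul_sum]
      congr 1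
      rw [Finset.sum_add_distrib, Finset.sum_sub_distrib]
    rw [expand, hP1, hQ1] at step
    calc ∑ j, 3 * (P j - Q j)^2 / (P j + 2*Q j) ≤ 2 * (D - 1 + 1) := step
      _ = 2 * D := by ring
  -- Cauchy-Schwarz
  have hCS : (∑ j, |P j - Q j|)^2 ≤ 3 * ∑ j, (P j - Q j)^2 / (P j + 2*Q j) := by
    have cs := Finset.sum_mul_sq_le_sq_mul_sq Finset.univ
      (fun j => |P j - Q j| / Real.sqrt (P j + 2*Q j))
      (fun j => Real.sqrt (P j + 2*Q j))
    have e1 : ∑ j, |P j - Q j| / Real.sqrt (P j + 2*Q j) * Real.sqrt (P j + 2*Q j)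
        = ∑ j, |P j - Q j| := by
      refine Finset.sum_congr rfl fun j _ => ?_
      rcases eq_or_lt_of_le (hsnn j) with h | h
      · have hp : P j = 0 := by nlinarith [hP0 j, hQ0 j]
        have hq : Q j = 0 := by nlinarith [hP0 j, hQ0 j]
        simp [hp, hq]
      · rw [div_mul_cancel₀ _ (Real.sqrt_pos.2 h).ne']
    have e2 : ∑ j, (|P j - Q j| / Real.sqrt (P j + 2*Q j))^2
        = ∑ j, (P j - Q j)^2 / (P j + 2*Q j) := by
      refine Finset.sum_congr rfl fun j _ => ?_
      rw [div_pow, sq_abs, Real.sq_sqrt (hsnn j)]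
    have e3 : ∑ j, (Real.sqrt (P j + 2*Q j))^2 = 3 := by
      have : ∑ j, (Real.sqrt (P j + 2*Q j))^2 = ∑ j, (P j + 2*Q j) :=
        Finset.sum_congr rfl fun j _ => Real.sq_sqrt (hsnn j)
      rw [this, Finset.sum_add_distrib, hP1, ← Finset.mul_sum, hQ1]
      norm_num
    rw [e1, e2, e3] at cs
    linarith
  have hfin : (∑ j, |P j - Q j|)^2 ≤ 2 * D := by
    refine hCS.trans ?_
    have : 3 * ∑ j, (P j - Q j)^2 / (P j + 2*Q j)
        = ∑ j, 3 * (P j - Q j)^2 / (P j + 2*Q j) := by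
      rw [Finset.mul_sum]
      exact Finset.sum_congr rfl fun j _ => (mul_div_assoc _ _ _).symm
    rw [this]; exact hsum1
  have h2Dnn : (0:ℝ) ≤ 2 * D := le_trans (sq_nonneg _) hfin
  have habsle : ∑ j, |P j - Q j| ≤ Real.sqrt (2 * D) := by
    rw [Real.le_sqrt (Finset.sum_nonneg fun j _ => abs_nonneg _) h2Dnn]
    exact hfin
  refine ⟨?_, habsle⟩
  apply Finset.sup'_le
  intro A hA
  have hsplit : ∑ j ∈ A, (P j - Q j) + ∑ j ∈ Aᶜ, (P j - Q j) = 0 := by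
    have := Finset.sum_add_sum_compl A (fun j => P j - Q j)
    rw [this, Finset.sum_sub_distrib, hP1, hQ1]
    ring
  have e : ∑ j ∈ A, P j - ∑ j ∈ A, Q j = ∑ j ∈ A, (P j - Q j) :=
    (Finset.sum_sub_distrib ..).symm
  have hA1 : |∑ j ∈ A, (P j - Q j)| ≤ ∑ j ∈ A, |P j - Q j| :=
    Finset.abs_sum_le_sum_abs _ _
  have hA2 : |∑ j ∈ A, (P j - Q j)| ≤ ∑ j ∈ Aᶜ, |P j - Q j| := by
    rw [show ∑ j ∈ A, (P j - Q j) = -∑ j ∈ Aᶜ, (P j - Q j) by linarith, abs_neg]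
    exact Finset.abs_sum_le_sum_abs _ _
  have htot : ∑ j ∈ A, |P j - Q j| + ∑ j ∈ Aᶜ, |P j - Q j| = ∑ j, |P j - Q j| :=
    Finset.sum_add_sum_compl A _
  have hhalf : |∑ j ∈ A, P j - ∑ j ∈ A, Q j| ≤ (∑ j, |P j - Q j|) / 2 := by
    rw [e]; linarith
  have hsq : Real.sqrt (2 * D) / 2 = Real.sqrt (D / 2) := by
    rw [show D / 2 = (2 * D) / 4 by ring, Real.sqrt_div h2Dnn,
      show Real.sqrt 4 = 2 by
        rw [show (4:ℝ) = 2^2 by norm_num, Real.sqrt_sq (by norm_num : (0:ℝ) ≤ 2)]]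
  linarith [habsle, hhalf, hsq.symm.le]
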